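/- Let A be a submodule of V and let s, s', s₀, s₀' ∈ V. The Hermitian inner product ⟨|A_{s,s'}⟩, |A_{s₀,s₀'}⟩⟩ equals 0 if and only if A + s ≠ A + s₀ or A^⊥ + s' ≠ A^⊥ + s₀'. (Equivalently: the two coset states are orthogonal if and only if the corresponding pair of cosets differ; when both cosets coincide the inner product is ±1.) -/

import Mathlib

open scoped BigOperators Kronecker Classical ComplexOrder

noncomputable section

/-- The vector space `F₂ⁿ`. -/
abbrev V (n : ℕ) : Type := Fin n → ZMod 2

/-- The standard bilinear pairing `⟨x,y⟩ = ∑ i, xᵢ * yᵢ` on `F₂ⁿ`. -/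
def pairing {n : ℕ} (x y : V n) : ZMod 2 := ∑ i, x i * y i

/-- `(−1)^b ∈ ℂ` for `b : ZMod 2`. -/
def sign (b : ZMod 2) : ℂ := if b = 0 then 1 else -1

lemma pairing_add_right {n : ℕ} (x y z : V n) :
    pairing x (y + z) = pairing x y + pairing x z := by
  simp [pairing, mul_add, Finset.sum_add_distrib]

lemma pairing_smul_right {n : ℕ} (c : ZMod 2) (x y : V n) :
    pairing x (c • y) = c * pairing x y := by
  simp only [pairing, Pi.smul_apply, smul_eq_mul, Finset.mul_sum]
  exact Finset.sum_congr rfl fun i _ => by ring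

/-- The orthogonal complement `A^⊥ = {y | ∀ a ∈ A, ⟨a,y⟩ = 0}`. -/
def perp {n : ℕ} (A : Submodule (ZMod 2) (V n)) : Submodule (ZMod 2) (V n) where
  carrier := {y | ∀ a ∈ A, pairing a y = 0}
  zero_mem' := by
    simp only [Set.mem_setOf_eq]
    intro a _
    simp [pairing]
  add_mem' := by
    intro y z hy hz
    simp only [Set.mem_setOf_eq] at *
    intro a ha
    rw [pairing_add_right, hy a ha, hz a ha, add_zero]
  smul_mem' := by
    intro c y hy
    simp only [Set.mem_setOf_eq] at *
    intro a ha
    rw [pairing_smul_right, hy a ha, mul_zero]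

/-- The coset `A + s = {a + s : a ∈ A}`. -/
def coset {n : ℕ} (A : Submodule (ZMod 2) (V n)) (s : V n) : Set (V n) :=
  {v | ∃ a ∈ A, v = a + s}

noncomputable instance {n : ℕ} (A : Submodule (ZMod 2) (V n)) : Fintype A :=
  Fintype.ofFinite _

/-- The coset state `|A_{s,s'}⟩ = |A|^{−1/2} ∑_{a ∈ A} (−1)^{⟨a,s'⟩} e_{a+s}`. -/
noncomputable def cosetState {n : ℕ} (A : Submodule (ZMod 2) (V n)) (s s' : V n) :
    EuclideanSpace ℂ (V n) :=
  ((Real.sqrt (Nat.card A) : ℂ))⁻¹ •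
    ∑ a : A, sign (pairing (a : V n) s') • EuclideanSpace.single ((a : V n) + s) (1 : ℂ)

/-- A family of orthogonal projections: each member is Hermitian and idempotent. -/
def IsProjFamily {ι m : Type*} [Fintype m] (P : ι → Matrix m m ℂ) : Prop :=
  ∀ p, (P p).IsHermitian ∧ P p * P p = P p

/-- Coset invariance of a family indexed by pairs `(s, s')`:
the value depends only on the pair of cosets `(A + s, A^⊥ + s')`. -/
def CosetInvariant {n : ℕ} {α : Type*} (A : Submodule (ZMod 2) (V n))
    (F : V n × V n → α) : Prop :=
  ∀ s₁ s₁' s₂ s₂' : V n, coset A s₁ = coset A s₂ →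
    coset (perp A) s₁' = coset (perp A) s₂' → F (s₁, s₁') = F (s₂, s₂')

/-- The rank-one matrix `|A_{s,s'}⟩⟨A_{s,s'}|`. -/
noncomputable def outer {n : ℕ} (A : Submodule (ZMod 2) (V n)) (s s' : V n) :
    Matrix (V n) (V n) ℂ :=
  Matrix.of fun x y => cosetState A s s' x * (starRingEnd ℂ) (cosetState A s s' y)

/-- `Π^A[P,Q] = 2^{−n} ∑_{s,s'} |A_{s,s'}⟩⟨A_{s,s'}| ⊗ P(s,s') ⊗ Q(s,s')`. -/
noncomputable def PiMat {n : ℕ} {I J : Type*} [Fintype I] [Fintype J]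
    (A : Submodule (ZMod 2) (V n)) (P : V n × V n → Matrix I I ℂ)
    (Q : V n × V n → Matrix J J ℂ) : Matrix (V n × I × J) (V n × I × J) ℂ :=
  ((2 : ℂ) ^ n)⁻¹ • ∑ s : V n, ∑ s' : V n, (outer A s s') ⊗ₖ (P (s, s') ⊗ₖ Q (s, s'))

/-- The `ℓ² → ℓ²` operator norm of a complex square matrix. -/
noncomputable def opNorm {m : Type*} [Fintype m] [DecidableEq m] (M : Matrix m m ℂ) : ℝ :=
  ‖Matrix.toEuclideanCLM (𝕜 := ℂ) M‖

/-!
Both coset states are supported on their cosets of `A`, so the inner product vanishes unless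
`s + s₀ ∈ A`. In that case it is `±|A|⁻¹ ∑_{a ∈ A} (-1)^⟨a, s' + s₀'⟩`, a sum of the character
`a ↦ (-1)^⟨a, s' + s₀'⟩` of `A`, which is `|A|` if this character is trivial, i.e.
`s' + s₀' ∈ A^⊥`, and `0` otherwise.
-/

lemma Fintype.sum_subtype_ite_val_eq {α M : Type*} [DecidableEq α] [AddCommMonoid M]
    {p : α → Prop} [Fintype (Subtype p)] (w : α) (f : α → M) :
    ∑ a : Subtype p, (if w = a.1 then f a.1 else 0) = if p w then f w else 0 := by
  by_cases hw : p w
  · rw [if_pos hw,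
      Fintype.sum_eq_single ⟨w, hw⟩ fun a ha => if_neg fun h => ha (Subtype.ext h.symm), if_pos rfl]
  · rw [if_neg hw]
    exact Finset.sum_eq_zero fun a _ => if_neg fun h : w = a.1 => hw (h ▸ a.2)

lemma sign_add (a b : ZMod 2) : sign (a + b) = sign a * sign b := by
  obtain rfl | rfl := (by decide : ∀ x : ZMod 2, x = 0 ∨ x = 1) a <;>
  obtain rfl | rfl := (by decide : ∀ x : ZMod 2, x = 0 ∨ x = 1) b <;>
  simp [sign, show (1 + 1 : ZMod 2) = 0 from rfl]

lemma sign_ne_zero' (b : ZMod 2) : sign b ≠ 0 := by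
  unfold sign; split_ifs <;> norm_num

lemma sign_eq_one_iff' (b : ZMod 2) : sign b = 1 ↔ b = 0 := by
  unfold sign; split_ifs with h <;> norm_num [h]

lemma conj_sign (b : ZMod 2) : starRingEnd ℂ (sign b) = sign b := by
  unfold sign; split_ifs <;> simp

section

variable {n : ℕ} (A : Submodule (ZMod 2) (V n))

lemma pairing_add_left (x y z : V n) : pairing (x + y) z = pairing x z + pairing y z :=
  add_dotProduct x y z

variable {A} in
lemma mem_coset_iff {s v : V n} : v ∈ coset A s ↔ v + s ∈ A := by
  refine ⟨?_, fun h => ⟨v + s, h, ?_⟩⟩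
  · rintro ⟨a, ha, rfl⟩
    rwa [add_assoc, ZModModule.add_self, add_zero]
  · rw [add_assoc, ZModModule.add_self, add_zero]

lemma coset_eq_coset_iff (s t : V n) : coset A s = coset A t ↔ s + t ∈ A := by
  refine ⟨fun h => ?_, fun h => Set.ext fun v => ?_⟩
  · rw [← mem_coset_iff, ← h, mem_coset_iff, ZModModule.add_self]
    exact A.zero_mem
  · rw [mem_coset_iff, mem_coset_iff, ← A.add_mem_iff_left h, ZModModule.add_add_add_cancel]

def pairingChar (t : V n) : AddChar A ℂ where
  toFun a := sign (pairing a t)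
  map_zero_eq_one' := by simp [pairing, sign]
  map_add_eq_mul' a b := by simp [pairing_add_left, sign_add]

lemma pairingChar_eq_zero_iff (t : V n) : pairingChar A t = 0 ↔ t ∈ perp A := by
  simp only [AddChar.eq_zero_iff, pairingChar, AddChar.coe_mk, sign_eq_one_iff', Subtype.forall]
  rfl

lemma sum_sign_pairing (t : V n) :
    ∑ a : A, sign (pairing a t) = if t ∈ perp A then (Nat.card A : ℂ) else 0 := by
  rw [Nat.card_eq_fintype_card, ← pairingChar_eq_zero_iff]
  exact AddChar.sum_eq_ite (pairingChar A t)

lemma cosetState_apply (s s' v : V n) :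
    cosetState A s s' v =
      (Real.sqrt (Nat.card A) : ℂ)⁻¹ * if v + s ∈ A then sign (pairing (v + s) s') else 0 := by
  simp only [cosetState, PiLp.smul_apply, WithLp.ofLp_sum, Finset.sum_apply, PiLp.single_apply,
    smul_eq_mul, mul_ite, mul_one, mul_zero, ← sub_eq_iff_eq_add, ZModModule.sub_eq_add]
  rw [Fintype.sum_subtype_ite_val_eq (v + s) fun x => sign (pairing x s'), mul_ite, mul_zero]

lemma inner_cosetState_eq_sum (s s' s₀ s₀' : V n) :
    inner ℂ (cosetState A s s') (cosetState A s₀ s₀') = (Nat.card A : ℂ)⁻¹ *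
      ∑ a : A, sign (pairing a s') *
        if (a : V n) + (s + s₀) ∈ A then sign (pairing ((a : V n) + (s + s₀)) s₀') else 0 := by
  nth_rewrite 1 [cosetState]
  simp only [inner_smul_left, sum_inner, EuclideanSpace.inner_single_left, cosetState_apply,
    conj_sign, map_one, one_mul, add_assoc]
  simp_rw [mul_left_comm (sign _)]
  rw [← Finset.mul_sum, ← mul_assoc, map_inv₀, Complex.conj_ofReal, ← mul_inv,
    ← Complex.ofReal_mul, Real.mul_self_sqrt (Nat.cast_nonneg _), Complex.ofReal_natCast]

lemma inner_cosetState (s s' s₀ s₀' : V n) :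
    inner ℂ (cosetState A s s') (cosetState A s₀ s₀') =
      if s + s₀ ∈ A ∧ s' + s₀' ∈ perp A then sign (pairing (s + s₀) s₀') else 0 := by
  rw [inner_cosetState_eq_sum]
  by_cases hd : s + s₀ ∈ A
  · have hterm (a : A) : (sign (pairing a s') *
        if (a : V n) + (s + s₀) ∈ A then sign (pairing ((a : V n) + (s + s₀)) s₀') else 0) =
        sign (pairing (s + s₀) s₀') * sign (pairing a (s' + s₀')) := by
      rw [if_pos (A.add_mem a.2 hd), pairing_add_left, pairing_add_right, sign_add, sign_add]
      ring
    have hcard : (Nat.card A : ℂ) ≠ 0 := Nat.cast_ne_zero.mpr Nat.card_pos.ne'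
    simp only [hterm, ← Finset.mul_sum, sum_sign_pairing, hd, true_and]
    split_ifs
    · field_simp
    · simp
  · have hnot_mem (a : A) : (a : V n) + (s + s₀) ∉ A :=
      fun h => hd ((A.add_mem_iff_right a.2).mp h)
    simp [hnot_mem, hd]

end

theorem cosetState_inner_eq_zero_iff_general
    {n : ℕ} (A : Submodule (ZMod 2) (V n)) (s s' s₀ s₀' : V n) :
    (inner ℂ (cosetState A s s') (cosetState A s₀ s₀') : ℂ) = 0 ↔
      coset A s ≠ coset A s₀ ∨ coset (perp A) s' ≠ coset (perp A) s₀' := by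
  rw [inner_cosetState, ne_eq, ne_eq, coset_eq_coset_iff, coset_eq_coset_iff, ← not_and_or]
  split_ifs with h
  · simp [h, sign_ne_zero']
  · simp [h]

/-- Two coset states for the same subspace are orthogonal iff the corresponding
pairs of cosets differ. -/
theorem cosetState_inner_eq_zero_iff
    {n : ℕ} (hn : 0 < n) (A : Submodule (ZMod 2) (V n)) (s s' s₀ s₀' : V n) :
    (inner ℂ (cosetState A s s') (cosetState A s₀ s₀') : ℂ) = 0 ↔
      coset A s ≠ coset A s₀ ∨ coset (perp A) s' ≠ coset (perp A) s₀' :=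
  cosetState_inner_eq_zero_iff_general A s s' s₀ s₀'
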